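/- Let B = ⊕_{g∈G} B_g be a homogeneously non-degenerate G-graded algebra satisfying B_g·B_{g⁻¹}·B_g = B_g for all g, and suppose that for each g ∈ G the linking algebra C_g = [[B_gB_{g⁻¹}, B_g],[B_{g⁻¹}, B_{g⁻¹}B_g]] admits multipliers u_g, v_g with u_gv_g = e₁₁ and v_gu_g = e₂₂. Then the left multiplication map L_{u_g} : B_{g⁻¹} → D_g extends to an isomorphism of right B-modules L̃_{u_g} : B_{g⁻¹}B → B_gB sending xy ↦ (u_g x)y for x ∈ B_{g⁻¹}, y ∈ B, with inverse L̃_{v_g} : B_gB → B_{g⁻¹}B, xy ↦ (v_g x)y. -/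

import Mathlib

/-- The additive subgroup generated by products of elements of `S` and `T`. -/
def setMul {B : Type} [NonUnitalRing B] (S T : AddSubgroup B) : AddSubgroup B :=
  AddSubgroup.closure (Set.image2 (· * ·) (S : Set B) (T : Set B))

variable {G : Type} [Group G] {B : Type} [NonUnitalRing B]

/-- Membership in the linking algebra
`C_g = [[B_g B_{g⁻¹}, B_g], [B_{g⁻¹}, B_{g⁻¹} B_g]]`, realized inside the
`2 × 2` matrices over `B`. -/
def CgMem (Bc : G → AddSubgroup B) (g : G) (x : Matrix (Fin 2) (Fin 2) B) : Prop :=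
  x 0 0 ∈ setMul (Bc g) (Bc g⁻¹) ∧ x 0 1 ∈ Bc g ∧
  x 1 0 ∈ Bc g⁻¹ ∧ x 1 1 ∈ setMul (Bc g⁻¹) (Bc g)

/-- A multiplier `(L, Rm)` of the linking algebra `C_g`. -/
structure LinkMult (Bc : G → AddSubgroup B) (g : G) where
  L : Matrix (Fin 2) (Fin 2) B → Matrix (Fin 2) (Fin 2) B
  Rm : Matrix (Fin 2) (Fin 2) B → Matrix (Fin 2) (Fin 2) B
  L_mem : ∀ x, CgMem Bc g x → CgMem Bc g (L x)
  R_mem : ∀ x, CgMem Bc g x → CgMem Bc g (Rm x)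
  L_add : ∀ x y, CgMem Bc g x → CgMem Bc g y → L (x + y) = L x + L y
  R_add : ∀ x y, CgMem Bc g x → CgMem Bc g y → Rm (x + y) = Rm x + Rm y
  L_mul : ∀ x y, CgMem Bc g x → CgMem Bc g y → L (x * y) = L x * y
  R_mul : ∀ x y, CgMem Bc g x → CgMem Bc g y → Rm (x * y) = x * Rm y
  compat : ∀ x y, CgMem Bc g x → CgMem Bc g y → Rm x * y = x * L y

/-- Left action of the corner multiplier `e₁₁` on `C_g`. -/
def me11L (x : Matrix (Fin 2) (Fin 2) B) : Matrix (Fin 2) (Fin 2) B :=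
  !![x 0 0, x 0 1; 0, 0]

/-- Right action of the corner multiplier `e₁₁` on `C_g`. -/
def me11R (x : Matrix (Fin 2) (Fin 2) B) : Matrix (Fin 2) (Fin 2) B :=
  !![x 0 0, 0; x 1 0, 0]

/-- Left action of the corner multiplier `e₂₂` on `C_g`. -/
def me22L (x : Matrix (Fin 2) (Fin 2) B) : Matrix (Fin 2) (Fin 2) B :=
  !![0, 0; x 1 0, x 1 1]

/-- Right action of the corner multiplier `e₂₂` on `C_g`. -/
def me22R (x : Matrix (Fin 2) (Fin 2) B) : Matrix (Fin 2) (Fin 2) B :=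
  !![0, x 0 1; 0, x 1 1]

/-- `u_g v_g = e₁₁` and `v_g u_g = e₂₂` in the multiplier algebra of `C_g`
(recall `L_{uv} = L_u ∘ L_v` and `R_{uv} = R_v ∘ R_u`). -/
def CornerUVg (Bc : G → AddSubgroup B) (g : G) (u v : LinkMult Bc g) : Prop :=
  (∀ x, CgMem Bc g x → u.L (v.L x) = me11L x) ∧
  (∀ x, CgMem Bc g x → v.Rm (u.Rm x) = me11R x) ∧
  (∀ x, CgMem Bc g x → v.L (u.L x) = me22L x) ∧
  (∀ x, CgMem Bc g x → u.Rm (v.Rm x) = me22R x)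

/-!
For `s ∈ B_{g⁻¹}B` the value `ℓ s` is characterised intrinsically as the unique `r ∈ B_gB` with
`c * r = (c u_g) * s` for all `c ∈ B_{g⁻¹}`, where `c u_g ∈ D_{g⁻¹}` is the right action of `u_g`
on `C_g`. Uniqueness means that `B_{g⁻¹}` annihilates no nonzero element of `B_gB`: splitting such
an element into homogeneous components and using non-degeneracy reduces this to elements `w ∈ D_g`,
and for these `u_g v_g = e₁₁`, `v_g u_g = e₂₂` force `w = 0`. Existence is checked on the
generators `x * y`, and additivity and right `B`-linearity follow from uniqueness. The inverse is
the same construction for `v_g`; swapping the two corners of the linking algebra exchanges `g` with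
`g⁻¹` and `u_g` with `v_g`.
-/

theorem mul_mem_setMul {S T : AddSubgroup B} {s t : B} (hs : s ∈ S) (ht : t ∈ T) :
    s * t ∈ setMul S T :=
  AddSubgroup.subset_closure ⟨s, hs, t, ht, rfl⟩

theorem setMul_le {S T U : AddSubgroup B} (h : ∀ s ∈ S, ∀ t ∈ T, s * t ∈ U) :
    setMul S T ≤ U :=
  (AddSubgroup.closure_le U).2 <| by rintro _ ⟨s, hs, t, ht, rfl⟩; exact h s hs t ht

theorem setMul_mono {S S' T T' : AddSubgroup B} (hS : S ≤ S') (hT : T ≤ T') :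
    setMul S T ≤ setMul S' T' :=
  AddSubgroup.closure_mono (Set.image2_subset hS hT)

@[elab_as_elim]
theorem setMul_induction {S T : AddSubgroup B} {p : (x : B) → x ∈ setMul S T → Prop}
    (mul : ∀ s (hs : s ∈ S) t (ht : t ∈ T), p (s * t) (mul_mem_setMul hs ht))
    (zero : p 0 (zero_mem _))
    (add : ∀ x y hx hy, p x hx → p y hy → p (x + y) (add_mem hx hy))
    {x : B} (hx : x ∈ setMul S T) : p x hx := by
  induction hx using AddSubgroup.closure_induction'' with
  | mem _ h => obtain ⟨s, hs, t, ht, rfl⟩ := h; exact mul s hs t ht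
  | neg_mem _ h =>
    obtain ⟨s, hs, t, ht, rfl⟩ := h
    simpa only [neg_mul] using mul (-s) (neg_mem hs) t ht
  | zero => exact zero
  | add x y hx hy ihx ihy => exact add x y hx hy ihx ihy

theorem mul_right_mem_setMul {S T T' : AddSubgroup B} {x y : B} (hx : x ∈ setMul S T)
    (hT : ∀ t ∈ T, t * y ∈ T') : x * y ∈ setMul S T' :=
  setMul_le (U := (setMul S T').comap (AddMonoidHom.mulRight y))
    (fun s hs t ht => by simpa [mul_assoc] using mul_mem_setMul hs (hT t ht)) hx

section GraphFun

variable {M N : Type*} [AddGroup M] [AddGroup N]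

open Classical in
noncomputable def graphFun (Γ : AddSubgroup (M × N)) (x : M) : N :=
  if h : ∃ y, (x, y) ∈ Γ then h.choose else 0

theorem graphFun_eq {Γ : AddSubgroup (M × N)} (hΓ : ∀ y, ((0 : M), y) ∈ Γ → y = 0)
    {x : M} {y : N} (h : (x, y) ∈ Γ) : graphFun Γ x = y := by
  have hex : ∃ y, (x, y) ∈ Γ := ⟨y, h⟩
  rw [graphFun, dif_pos hex]
  exact sub_eq_zero.1 <| hΓ _ <| by simpa using sub_mem hex.choose_spec h

end GraphFun

theorem exists_mem_of_mem_setMul_top {Q : AddSubgroup B} {Γ : AddSubgroup (B × B)} {f : B → B}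
    (hf : ∀ x ∈ Q, ∀ b, (x * b, f x * b) ∈ Γ) {s : B} (hs : s ∈ setMul Q ⊤) :
    ∃ r, (s, r) ∈ Γ := by
  induction hs using setMul_induction with
  | mul x hx b _ => exact ⟨_, hf x hx b⟩
  | zero => exact ⟨0, zero_mem Γ⟩
  | add _ _ _ _ h₁ h₂ =>
    obtain ⟨r₁, h₁⟩ := h₁
    obtain ⟨r₂, h₂⟩ := h₂
    exact ⟨r₁ + r₂, add_mem h₁ h₂⟩

def IsLeftFaithful (Q S : AddSubgroup B) : Prop :=
  ∀ t ∈ S, (∀ c ∈ Q, c * t = 0) → t = 0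

def mulGraph (P Q : AddSubgroup B) (ρ : B → B) : AddSubgroup (B × B) where
  carrier := {p | p.2 ∈ setMul P ⊤ ∧ ∀ c ∈ Q, c * p.2 = ρ c * p.1}
  zero_mem' := ⟨zero_mem _, by simp⟩
  add_mem' ha hb := ⟨add_mem ha.1 hb.1, fun c hc => by simp [mul_add, ha.2 c hc, hb.2 c hc]⟩
  neg_mem' ha := ⟨neg_mem ha.1, fun c hc => by simp [ha.2 c hc]⟩

structure IsRightExtension (Q P : AddSubgroup B) (f ℓ : B → B) : Prop where
  mapsTo : ∀ x ∈ setMul Q ⊤, ℓ x ∈ setMul P ⊤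
  map_add : ∀ x y, x ∈ setMul Q ⊤ → y ∈ setMul Q ⊤ → ℓ (x + y) = ℓ x + ℓ y
  map_mul : ∀ x b, x ∈ setMul Q ⊤ → ℓ (x * b) = ℓ x * b
  map_mul_of_mem : ∀ x y, x ∈ Q → ℓ (x * y) = f x * y
  eqOn : ∀ x ∈ Q, ℓ x = f x

section MulGraph

variable {P Q : AddSubgroup B} {ρ f : B → B}

theorem mul_right_mem_mulGraph {p : B × B} (hp : p ∈ mulGraph P Q ρ) (b : B) :
    (p.1 * b, p.2 * b) ∈ mulGraph P Q ρ :=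
  ⟨mul_right_mem_setMul hp.1 fun _ _ => AddSubgroup.mem_top _,
    fun c hc => by rw [← mul_assoc, hp.2 c hc, mul_assoc]⟩

theorem IsLeftFaithful.eq_zero_of_mem_mulGraph (hQ : IsLeftFaithful Q (setMul P ⊤)) (r : B)
    (hr : ((0 : B), r) ∈ mulGraph P Q ρ) : r = 0 :=
  hQ r hr.1 fun c hc => by simpa using hr.2 c hc

theorem isRightExtension_graphFun_mulGraph (hQ : IsLeftFaithful Q (setMul P ⊤))
    (hf : ∀ x ∈ Q, (x, f x) ∈ mulGraph P Q ρ) :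
    IsRightExtension Q P f (graphFun (mulGraph P Q ρ)) := by
  have hΓ := hQ.eq_zero_of_mem_mulGraph (ρ := ρ)
  have hgraph : ∀ s ∈ setMul Q ⊤, (s, graphFun (mulGraph P Q ρ) s) ∈ mulGraph P Q ρ := by
    intro s hs
    obtain ⟨r, hr⟩ :=
      exists_mem_of_mem_setMul_top (fun x hx b => mul_right_mem_mulGraph (hf x hx) b) hs
    rwa [graphFun_eq hΓ hr]
  exact
    { mapsTo := fun s hs => (hgraph s hs).1
      map_add := fun x y hx hy => graphFun_eq hΓ (add_mem (hgraph x hx) (hgraph y hy))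
      map_mul := fun x b hx => graphFun_eq hΓ (mul_right_mem_mulGraph (hgraph x hx) b)
      map_mul_of_mem := fun x y hx => graphFun_eq hΓ (mul_right_mem_mulGraph (hf x hx) y)
      eqOn := fun x hx => graphFun_eq hΓ (hf x hx) }

theorem graphFun_mulGraph_graphFun_mulGraph {σ : B → B} (hQ : IsLeftFaithful Q (setMul P ⊤))
    (hP : IsLeftFaithful P (setMul Q ⊤)) (hf : ∀ x ∈ Q, (x, f x) ∈ mulGraph P Q ρ)
    (hσ : ∀ c ∈ P, ∀ x ∈ Q, c * x = σ c * f x) {s : B} (hs : s ∈ setMul Q ⊤) :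
    graphFun (mulGraph Q P σ) (graphFun (mulGraph P Q ρ) s) = s := by
  have hgen : ∀ x ∈ Q, ∀ b, (x * b, f x * b) ∈
      mulGraph P Q ρ ⊓ (mulGraph Q P σ).comap (AddEquiv.prodComm : B × B ≃+ B × B) := by
    refine fun x hx b => ⟨mul_right_mem_mulGraph (hf x hx) b, ?_, fun c hc => ?_⟩
    · exact mul_mem_setMul hx (AddSubgroup.mem_top b)
    · show c * (x * b) = σ c * (f x * b)
      rw [← mul_assoc, hσ c hc x hx, mul_assoc]
  obtain ⟨r, hr, hr'⟩ := exists_mem_of_mem_setMul_top hgen hs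
  rw [graphFun_eq hQ.eq_zero_of_mem_mulGraph hr]
  exact graphFun_eq hP.eq_zero_of_mem_mulGraph hr'

end MulGraph

def HomogeneouslyNondegenerate (Bc : G → AddSubgroup B) : Prop :=
  ∀ (g : G) (x : B), x ∈ Bc g → x ≠ 0 → (∃ y ∈ Bc g⁻¹, x * y ≠ 0) ∧ (∃ y ∈ Bc g⁻¹, y * x ≠ 0)

section Grading

variable [DecidableEq G] {Bc : G → AddSubgroup B} [DirectSum.Decomposition Bc]

theorem decompose_mul_of_mem
    (hgr : ∀ (g h : G) (x y : B), x ∈ Bc g → y ∈ Bc h → x * y ∈ Bc (g * h))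
    {k : G} {c : B} (hc : c ∈ Bc k) (x : B) (h : G) :
    (DirectSum.decompose Bc (c * x) (k * h) : B) = c * DirectSum.decompose Bc x h := by
  induction x using DirectSum.Decomposition.inductionOn Bc with
  | zero => simp
  | @homogeneous i m =>
    obtain ⟨m, hm⟩ := m
    by_cases hih : i = h
    · subst hih
      rw [DirectSum.decompose_of_mem_same Bc hm,
        DirectSum.decompose_of_mem_same Bc (hgr _ _ _ _ hc hm)]
    · rw [DirectSum.decompose_of_mem_ne Bc hm hih,
        DirectSum.decompose_of_mem_ne Bc (hgr _ _ _ _ hc hm) (fun h' => hih (mul_left_cancel h')),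
        mul_zero]
  | add a b ha hb => simp [mul_add, DirectSum.decompose_add, ha, hb]

theorem IsLeftFaithful.setMul_top
    (hgr : ∀ (g h : G) (x y : B), x ∈ Bc g → y ∈ Bc h → x * y ∈ Bc (g * h))
    (hnd : HomogeneouslyNondegenerate Bc) {g : G}
    (hD : IsLeftFaithful (Bc g⁻¹) (setMul (Bc g) (Bc g⁻¹))) :
    IsLeftFaithful (Bc g⁻¹) (setMul (Bc g) ⊤) := by
  intro t ht hann
  have hcomp : ∀ h, ∀ s ∈ setMul (Bc g) ⊤,
      (DirectSum.decompose Bc s h : B) ∈ setMul (Bc g) (Bc (g⁻¹ * h)) := by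
    intro h s hs
    induction hs using setMul_induction with
    | mul a ha b _ =>
      have := decompose_mul_of_mem hgr ha b (g⁻¹ * h)
      rw [mul_inv_cancel_left] at this
      exact this ▸ mul_mem_setMul ha (SetLike.coe_mem _)
    | zero => simp
    | add x y _ _ hx hy => simpa [DirectSum.decompose_add] using add_mem hx hy
  have hann' : ∀ h, ∀ c ∈ Bc g⁻¹, c * (DirectSum.decompose Bc t h : B) = 0 := by
    intro h c hc
    rw [← decompose_mul_of_mem hgr hc, hann c hc]
    simp
  have hzero : ∀ h, (DirectSum.decompose Bc t h : B) = 0 := by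
    intro h
    by_contra hne
    obtain ⟨y, hy, hne'⟩ := (hnd h _ (SetLike.coe_mem _) hne).1
    refine hne' (hD _ (mul_right_mem_setMul (hcomp h t ht) fun q hq => ?_) fun c hc => ?_)
    · simpa using hgr _ _ _ _ hq hy
    · rw [← mul_assoc, hann' h c hc, zero_mul]
  apply (DirectSum.decompose Bc).injective
  ext h
  simp [hzero h]

end Grading

section Linking

variable {Bc : G → AddSubgroup B} {g : G}

theorem cgMem_of {a b c d : B} (ha : a ∈ setMul (Bc g) (Bc g⁻¹)) (hb : b ∈ Bc g)
    (hc : c ∈ Bc g⁻¹) (hd : d ∈ setMul (Bc g⁻¹) (Bc g)) : CgMem Bc g !![a, b; c, d] :=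
  ⟨ha, hb, hc, hd⟩

theorem cgMem_lowerLeft {x : B} (hx : x ∈ Bc g⁻¹) : CgMem Bc g !![0, 0; x, 0] :=
  cgMem_of (zero_mem _) (zero_mem _) hx (zero_mem _)

theorem cgMem_upperRight {x : B} (hx : x ∈ Bc g) : CgMem Bc g !![0, x; 0, 0] :=
  cgMem_of (zero_mem _) hx (zero_mem _) (zero_mem _)

namespace LinkMult

/- For `x, c ∈ B_{g⁻¹}`: `u.lmul x` is `u_g x ∈ D_g` and `u.rmul c` is `c u_g ∈ D_{g⁻¹}`; the primed
versions are the same on the other corner, for `x, c ∈ B_g`. -/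
def lmul (u : LinkMult Bc g) (x : B) : B := u.L !![0, 0; x, 0] 0 0

def rmul (u : LinkMult Bc g) (c : B) : B := u.Rm !![0, 0; c, 0] 1 1

def lmul' (v : LinkMult Bc g) (x : B) : B := v.L !![0, x; 0, 0] 1 1

def rmul' (v : LinkMult Bc g) (c : B) : B := v.Rm !![0, c; 0, 0] 0 0

theorem L_zero (u : LinkMult Bc g) : u.L 0 = 0 := by
  have h0 : CgMem Bc g 0 := ⟨zero_mem _, zero_mem _, zero_mem _, zero_mem _⟩
  simpa using u.L_add 0 0 h0 h0

theorem L_lowerRight_zero_zero (u : LinkMult Bc g) {z : B}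
    (hz : z ∈ setMul (Bc g⁻¹) (Bc g)) : u.L !![0, 0; 0, z] 0 0 = 0 := by
  induction hz using setMul_induction with
  | mul q hq a ha =>
    have hqa : !![0, 0; 0, q * a] = !![0, 0; q, 0] * !![0, a; 0, 0] := by simp
    rw [hqa, u.L_mul _ _ (cgMem_lowerLeft hq) (cgMem_upperRight ha)]
    simp [Matrix.mul_apply]
  | zero =>
    have h0 : !![0, 0; 0, 0] = (0 : Matrix (Fin 2) (Fin 2) B) := by
      simpa using (Matrix.eta_fin_two (0 : Matrix (Fin 2) (Fin 2) B)).symm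
    simp [h0, u.L_zero]
  | add x y hx hy ihx ihy =>
    have hxy : !![0, 0; 0, x + y] = !![0, 0; 0, x] + !![(0 : B), 0; 0, y] := by simp
    rw [hxy, u.L_add _ _ (cgMem_of (zero_mem _) (zero_mem _) (zero_mem _) hx)
      (cgMem_of (zero_mem _) (zero_mem _) (zero_mem _) hy)]
    simp [ihx, ihy]

theorem lmul_mem_mulGraph (u : LinkMult Bc g) {x : B} (hx : x ∈ Bc g⁻¹) :
    (x, u.lmul x) ∈ mulGraph (Bc g) (Bc g⁻¹) u.rmul := by
  have hX := cgMem_lowerLeft (Bc := Bc) hx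
  refine ⟨setMul_mono le_rfl le_top (u.L_mem _ hX).1, fun c hc => ?_⟩
  have := congrFun₂ (u.compat _ _ (cgMem_lowerLeft hc) hX) 1 0
  simpa [Matrix.mul_apply, lmul, rmul] using this.symm

end LinkMult

namespace CornerUVg

variable {u v : LinkMult Bc g}

theorem L_L_lowerLeft (huv : CornerUVg Bc g u v) {x : B} (hx : x ∈ Bc g⁻¹) :
    v.L (u.L !![0, 0; x, 0]) = !![0, 0; x, 0] := by
  rw [huv.2.2.1 _ (cgMem_lowerLeft hx)]
  simp [me22L]

theorem L_lowerLeft_one_zero (huv : CornerUVg Bc g u v) {x : B} (hx : x ∈ Bc g⁻¹) :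
    u.L !![0, 0; x, 0] 1 0 = 0 := by
  have := congrFun₂ (huv.1 _ (u.L_mem _ (cgMem_lowerLeft hx))) 1 0
  simpa [huv.L_L_lowerLeft hx, me11L] using this

theorem mul_eq_rmul'_mul_lmul (huv : CornerUVg Bc g u v) {c x : B} (hc : c ∈ Bc g)
    (hx : x ∈ Bc g⁻¹) : c * x = v.rmul' c * u.lmul x := by
  have := congrFun₂ (v.compat _ _ (cgMem_upperRight hc) (u.L_mem _ (cgMem_lowerLeft hx))) 0 0
  rw [huv.L_L_lowerLeft hx] at this
  simpa [Matrix.mul_apply, huv.L_lowerLeft_one_zero hx, LinkMult.rmul', LinkMult.lmul]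
    using this.symm

theorem isLeftFaithful (hnd : HomogeneouslyNondegenerate Bc) (huv : CornerUVg Bc g u v) :
    IsLeftFaithful (Bc g⁻¹) (setMul (Bc g) (Bc g⁻¹)) := by
  intro w hw hann
  have hDw : ∀ e ∈ setMul (Bc g) (Bc g⁻¹), e * w = 0 := fun e he =>
    setMul_le (U := (AddMonoidHom.mulRight w).ker)
      (fun a _ q hq => by simp [mul_assoc, hann q hq]) he
  have hM : CgMem Bc g !![w, 0; 0, 0] := cgMem_of hw (zero_mem _) (zero_mem _) (zero_mem _)
  -- `N = v_g M` satisfies `u_g N = M` and `N = e₂₂ N`; non-degeneracy kills `N 1 0`, so `w` is the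
  -- `(0, 0)` entry of `u_g` applied to a matrix supported on the `(1, 1)` corner.
  obtain ⟨N, hN⟩ : ∃ N, v.L !![w, 0; 0, 0] = N := ⟨_, rfl⟩
  have hNmem : CgMem Bc g N := hN ▸ v.L_mem _ hM
  have huN : u.L N = !![w, 0; 0, 0] := by
    rw [← hN, huv.1 _ hM]
    simp [me11L]
  have hNe : me22L N = N := by rw [← huv.2.2.1 N hNmem, huN, hN]
  have hN10 : N 1 0 = 0 := by
    by_contra hne
    obtain ⟨y, hy, hyne⟩ := (hnd g⁻¹ _ hNmem.2.2.1 hne).2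
    rw [inv_inv] at hy
    have hY : CgMem Bc g !![0, y; 0, 0] := cgMem_upperRight hy
    have := congrFun₂ (v.compat _ _ hY hM) 0 0
    rw [hN] at this
    exact hyne (by simpa [Matrix.mul_apply, hDw _ (v.R_mem _ hY).1] using this.symm)
  have hNz : N = !![0, 0; 0, N 1 1] := by
    conv_lhs => rw [← hNe]
    simp [me22L, hN10]
  calc w = u.L N 0 0 := by simp [huN]
    _ = 0 := by rw [hNz]; exact u.L_lowerRight_zero_zero hNmem.2.2.2

end CornerUVg

end Linking

section Swap

variable {Bc : G → AddSubgroup B} {g : G}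

def cornerSwap {α : Type*} (M : Matrix (Fin 2) (Fin 2) α) : Matrix (Fin 2) (Fin 2) α :=
  !![M 1 1, M 1 0; M 0 1, M 0 0]

@[simp]
theorem cornerSwap_cornerSwap {α : Type*} (M : Matrix (Fin 2) (Fin 2) α) :
    cornerSwap (cornerSwap M) = M := by
  ext i j; fin_cases i <;> fin_cases j <;> rfl

theorem cornerSwap_add {α : Type*} [Add α] (M N : Matrix (Fin 2) (Fin 2) α) :
    cornerSwap (M + N) = cornerSwap M + cornerSwap N := by
  ext i j; fin_cases i <;> fin_cases j <;> rfl

theorem cornerSwap_mul {α : Type*} [AddCommMonoid α] [Mul α] (M N : Matrix (Fin 2) (Fin 2) α) :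
    cornerSwap (M * N) = cornerSwap M * cornerSwap N := by
  ext i j; fin_cases i <;> fin_cases j <;> simp [cornerSwap, Matrix.mul_apply, add_comm]

theorem CgMem.cornerSwap {M : Matrix (Fin 2) (Fin 2) B} (hM : CgMem Bc g M) :
    CgMem Bc g⁻¹ (_root_.cornerSwap M) := by
  obtain ⟨h₀₀, h₀₁, h₁₀, h₁₁⟩ := hM
  exact cgMem_of (by simpa using h₁₁) (by simpa using h₁₀) (by simpa using h₀₁)
    (by simpa using h₀₀)

theorem CgMem.of_cornerSwap {M : Matrix (Fin 2) (Fin 2) B} (hM : CgMem Bc g⁻¹ M) :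
    CgMem Bc g (_root_.cornerSwap M) := by
  simpa using hM.cornerSwap

namespace LinkMult

def swap (u : LinkMult Bc g) : LinkMult Bc g⁻¹ where
  L x := cornerSwap (u.L (cornerSwap x))
  Rm x := cornerSwap (u.Rm (cornerSwap x))
  L_mem x hx := (u.L_mem _ hx.of_cornerSwap).cornerSwap
  R_mem x hx := (u.R_mem _ hx.of_cornerSwap).cornerSwap
  L_add x y hx hy := by
    rw [cornerSwap_add, u.L_add _ _ hx.of_cornerSwap hy.of_cornerSwap, cornerSwap_add]
  R_add x y hx hy := by
    rw [cornerSwap_add, u.R_add _ _ hx.of_cornerSwap hy.of_cornerSwap, cornerSwap_add]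
  L_mul x y hx hy := by
    rw [cornerSwap_mul, u.L_mul _ _ hx.of_cornerSwap hy.of_cornerSwap, cornerSwap_mul,
      cornerSwap_cornerSwap]
  R_mul x y hx hy := by
    rw [cornerSwap_mul, u.R_mul _ _ hx.of_cornerSwap hy.of_cornerSwap, cornerSwap_mul,
      cornerSwap_cornerSwap]
  compat x y hx hy := by
    simpa [cornerSwap_mul] using
      congrArg cornerSwap (u.compat _ _ hx.of_cornerSwap hy.of_cornerSwap)

end LinkMult

theorem CornerUVg.swap {u v : LinkMult Bc g} (huv : CornerUVg Bc g u v) :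
    CornerUVg Bc g⁻¹ v.swap u.swap := by
  obtain ⟨h₁, h₂, h₃, h₄⟩ := huv
  refine ⟨fun x hx => ?_, fun x hx => ?_, fun x hx => ?_, fun x hx => ?_⟩ <;>
    simp only [LinkMult.swap, cornerSwap_cornerSwap, h₁, h₂, h₃, h₄, hx.of_cornerSwap] <;>
    ext i j <;> fin_cases i <;> fin_cases j <;> rfl

namespace LinkMult

theorem lmul_swap (u : LinkMult Bc g) : u.swap.lmul = u.lmul' := by
  funext x
  simp [lmul, lmul', swap, cornerSwap]

theorem rmul_swap (u : LinkMult Bc g) : u.swap.rmul = u.rmul' := by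
  funext x
  simp [rmul, rmul', swap, cornerSwap]

theorem rmul'_swap (u : LinkMult Bc g) : u.swap.rmul' = u.rmul := by
  funext x
  simp [rmul, rmul', swap, cornerSwap]

end LinkMult

end Swap

section Extension

variable {Bc : G → AddSubgroup B} {g : G}

namespace LinkMult

noncomputable def lmulExt (u : LinkMult Bc g) : B → B :=
  graphFun (mulGraph (Bc g) (Bc g⁻¹) u.rmul)

noncomputable def lmulExt' (v : LinkMult Bc g) : B → B :=
  graphFun (mulGraph (Bc g⁻¹) (Bc g) v.rmul')

theorem isRightExtension_lmulExt (u : LinkMult Bc g)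
    (hu : IsLeftFaithful (Bc g⁻¹) (setMul (Bc g) ⊤)) :
    IsRightExtension (Bc g⁻¹) (Bc g) u.lmul u.lmulExt :=
  isRightExtension_graphFun_mulGraph hu fun _ => u.lmul_mem_mulGraph

theorem lmulExt_swap (u : LinkMult Bc g) : u.swap.lmulExt = u.lmulExt' := by
  rw [lmulExt, lmulExt', rmul_swap, inv_inv]

theorem lmulExt'_swap (u : LinkMult Bc g) : u.swap.lmulExt' = u.lmulExt := by
  rw [lmulExt, lmulExt', rmul'_swap, inv_inv]

end LinkMult

theorem CornerUVg.lmulExt'_lmulExt {u v : LinkMult Bc g} (huv : CornerUVg Bc g u v)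
    (hu : IsLeftFaithful (Bc g⁻¹) (setMul (Bc g) ⊤))
    (hv : IsLeftFaithful (Bc g) (setMul (Bc g⁻¹) ⊤)) {s : B} (hs : s ∈ setMul (Bc g⁻¹) ⊤) :
    v.lmulExt' (u.lmulExt s) = s :=
  graphFun_mulGraph_graphFun_mulGraph hu hv (fun _ => u.lmul_mem_mulGraph)
    (fun _ hc _ hx => huv.mul_eq_rmul'_mul_lmul hc hx) hs

end Extension

theorem extend_left_multiplier_general {G : Type} [Group G] [DecidableEq G]
    {B : Type} [NonUnitalRing B]
    (Bc : G → AddSubgroup B)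
    (hdir : DirectSum.IsInternal Bc)
    (hgrmul : ∀ (g h : G) (x y : B), x ∈ Bc g → y ∈ Bc h → x * y ∈ Bc (g * h))
    (hnd : ∀ (g : G) (x : B), x ∈ Bc g → x ≠ 0 →
      (∃ y ∈ Bc g⁻¹, x * y ≠ 0) ∧ (∃ y ∈ Bc g⁻¹, y * x ≠ 0))
    (u v : ∀ g : G, LinkMult Bc g)
    (huv : ∀ g : G, CornerUVg Bc g (u g) (v g))
    (g : G) :
    ∃ ℓ ℓ' : B → B,
      (∀ x ∈ setMul (Bc g⁻¹) ⊤, ℓ x ∈ setMul (Bc g) ⊤) ∧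
      (∀ x ∈ setMul (Bc g) ⊤, ℓ' x ∈ setMul (Bc g⁻¹) ⊤) ∧
      (∀ x y, x ∈ setMul (Bc g⁻¹) ⊤ → y ∈ setMul (Bc g⁻¹) ⊤ → ℓ (x + y) = ℓ x + ℓ y) ∧
      (∀ x y, x ∈ setMul (Bc g) ⊤ → y ∈ setMul (Bc g) ⊤ → ℓ' (x + y) = ℓ' x + ℓ' y) ∧
      (∀ x b, x ∈ setMul (Bc g⁻¹) ⊤ → ℓ (x * b) = ℓ x * b) ∧
      (∀ x b, x ∈ setMul (Bc g) ⊤ → ℓ' (x * b) = ℓ' x * b) ∧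
      (∀ x y : B, x ∈ Bc g⁻¹ → ℓ (x * y) = ((u g).L !![0, 0; x, 0]) 0 0 * y) ∧
      (∀ x y : B, x ∈ Bc g → ℓ' (x * y) = ((v g).L !![0, x; 0, 0]) 1 1 * y) ∧
      (∀ x ∈ Bc g⁻¹, ℓ x = ((u g).L !![0, 0; x, 0]) 0 0) ∧
      (∀ x ∈ Bc g, ℓ' x = ((v g).L !![0, x; 0, 0]) 1 1) ∧
      (∀ x ∈ setMul (Bc g⁻¹) ⊤, ℓ' (ℓ x) = x) ∧
      (∀ x ∈ setMul (Bc g) ⊤, ℓ (ℓ' x) = x) := by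
  have : DirectSum.Decomposition Bc := hdir.chooseDecomposition
  have huv' := (huv g).swap
  have hu' := IsLeftFaithful.setMul_top hgrmul hnd (huv'.isLeftFaithful hnd)
  have hu := IsLeftFaithful.setMul_top hgrmul hnd ((huv g).isLeftFaithful hnd)
  have hv : IsLeftFaithful (Bc g) (setMul (Bc g⁻¹) ⊤) := by simpa only [inv_inv] using hu'
  have e := (u g).isRightExtension_lmulExt hu
  have e' : IsRightExtension (Bc g) (Bc g⁻¹) (v g).lmul' (v g).lmulExt' := by
    simpa only [inv_inv, LinkMult.lmul_swap, LinkMult.lmulExt_swap] using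
      (v g).swap.isRightExtension_lmulExt hu'
  have hvu : ∀ s ∈ setMul (Bc g) ⊤, (u g).lmulExt ((v g).lmulExt' s) = s := by
    simpa only [inv_inv, LinkMult.lmulExt_swap, LinkMult.lmulExt'_swap] using
      fun s hs => huv'.lmulExt'_lmulExt hu' (by simpa only [inv_inv] using hu) hs
  exact ⟨_, _, e.mapsTo, e'.mapsTo, e.map_add, e'.map_add, e.map_mul, e'.map_mul,
    e.map_mul_of_mem, e'.map_mul_of_mem, e.eqOn, e'.eqOn,
    fun _ => (huv g).lmulExt'_lmulExt hu hv, hvu⟩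

/-- STATEMENT 16, Lemma 5.1: let `B = ⊕_g B_g` be homogeneously
non-degenerate, satisfy `B_g B_{g⁻¹} B_g = B_g` and admit, for each `g`,
multipliers `u_g, v_g` of `C_g` with `u_g v_g = e₁₁`, `v_g u_g = e₂₂`.  Then
`L_{u_g} : B_{g⁻¹} → D_g` extends to an isomorphism of right `B`-modules
`L̃_{u_g} : B_{g⁻¹}B → B_gB`, `xy ↦ (u_g x)y`, with inverse
`L̃_{v_g} : B_gB → B_{g⁻¹}B`, `xy ↦ (v_g x)y`. -/
theorem extend_left_multiplier {G : Type} [Group G] [DecidableEq G]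
    {B : Type} [NonUnitalRing B]
    (Bc : G → AddSubgroup B)
    (hdir : DirectSum.IsInternal Bc)
    (hgrmul : ∀ (g h : G) (x y : B), x ∈ Bc g → y ∈ Bc h → x * y ∈ Bc (g * h))
    (hnd : ∀ (g : G) (x : B), x ∈ Bc g → x ≠ 0 →
      (∃ y ∈ Bc g⁻¹, x * y ≠ 0) ∧ (∃ y ∈ Bc g⁻¹, y * x ≠ 0))
    (hpr : ∀ g : G, setMul (setMul (Bc g) (Bc g⁻¹)) (Bc g) = Bc g)
    (u v : ∀ g : G, LinkMult Bc g)
    (huv : ∀ g : G, CornerUVg Bc g (u g) (v g))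
    (g : G) :
    ∃ ℓ ℓ' : B → B,
      (∀ x ∈ setMul (Bc g⁻¹) ⊤, ℓ x ∈ setMul (Bc g) ⊤) ∧
      (∀ x ∈ setMul (Bc g) ⊤, ℓ' x ∈ setMul (Bc g⁻¹) ⊤) ∧
      (∀ x y, x ∈ setMul (Bc g⁻¹) ⊤ → y ∈ setMul (Bc g⁻¹) ⊤ → ℓ (x + y) = ℓ x + ℓ y) ∧
      (∀ x y, x ∈ setMul (Bc g) ⊤ → y ∈ setMul (Bc g) ⊤ → ℓ' (x + y) = ℓ' x + ℓ' y) ∧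
      (∀ x b, x ∈ setMul (Bc g⁻¹) ⊤ → ℓ (x * b) = ℓ x * b) ∧
      (∀ x b, x ∈ setMul (Bc g) ⊤ → ℓ' (x * b) = ℓ' x * b) ∧
      (∀ x y : B, x ∈ Bc g⁻¹ → ℓ (x * y) = ((u g).L !![0, 0; x, 0]) 0 0 * y) ∧
      (∀ x y : B, x ∈ Bc g → ℓ' (x * y) = ((v g).L !![0, x; 0, 0]) 1 1 * y) ∧
      (∀ x ∈ Bc g⁻¹, ℓ x = ((u g).L !![0, 0; x, 0]) 0 0) ∧
      (∀ x ∈ Bc g, ℓ' x = ((v g).L !![0, x; 0, 0]) 1 1) ∧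
      (∀ x ∈ setMul (Bc g⁻¹) ⊤, ℓ' (ℓ x) = x) ∧
      (∀ x ∈ setMul (Bc g) ⊤, ℓ (ℓ' x) = x) :=
  extend_left_multiplier_general Bc hdir hgrmul hnd u v huv g
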